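/- arXiv:2212.00602 — 4 statements merged into one kernel-verified Lean document; each statement's English description precedes it below -/
import Mathlib

section
/- In a ring R with the SI property, every nilpotent element a lies in the lower nil-radical of R (the intersection of all prime ideals); consequently R is 2-primal, i.e., the set of nilpotent elements equals the lower nil-radical. -/
/-- A prime two-sided ideal of a ring, as an additive subgroup closed under left and
right multiplication such that `aRb ⊆ P` implies `a ∈ P` or `b ∈ P`. -/
structure IsPrimeTwoSidedIdeal {R : Type*} [Ring R] (P : AddSubgroup R) : Prop where
  ne_top : (P : Set R) ≠ Set.univ
  mul_mem_left : ∀ a ∈ P, ∀ r : R, r * a ∈ P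
  mul_mem_right : ∀ a ∈ P, ∀ r : R, a * r ∈ P
  prime : ∀ a b : R, (∀ r : R, a * r * b ∈ P) → a ∈ P ∨ b ∈ P

/-! If `a ^ n = 0`, the SI property lets one insert arbitrary ring elements between the
factors: `y * a ^ (k + 1) = 0` gives `(y * r * a) * a ^ k = 0`. If `a` lay outside a prime `P`,
primeness would let us choose `r` with `y * r * a ∉ P`; starting from `y = 1` we reach, after
`n` steps, an element outside `P` that is `0`.

Conversely, a two-sided ideal `I` maximal among those missing every power of a non-nilpotent `x`
is prime: if `aRb ⊆ I` with `a, b ∉ I`, the ideal `{u | uRb ⊆ I}` strictly contains `I`, so it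
contains some `x ^ m`; then `{v | x ^ m R v ⊆ I}` contains `b`, hence some `x ^ k`, and
`x ^ (m + k) ∈ I`. -/

namespace IsPrimeTwoSidedIdeal

variable {R : Type*} [Ring R] {P : AddSubgroup R}

theorem one_notMem (hP : IsPrimeTwoSidedIdeal P) : (1 : R) ∉ P := fun h =>
  hP.ne_top <| Set.eq_univ_of_forall fun r => by simpa using hP.mul_mem_left 1 h r

theorem mul_pow_ne_zero_of_notMem (hSI : ∀ a b : R, a * b = 0 → ∀ r : R, a * r * b = 0)
    (hP : IsPrimeTwoSidedIdeal P) {a : R} (ha : a ∉ P) (n : ℕ) :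
    ∀ {y : R}, y ∉ P → y * a ^ n ≠ 0 := by
  induction n with
  | zero => exact fun hy h => hy (by rw [pow_zero, mul_one] at h; exact h ▸ P.zero_mem)
  | succ n ih =>
    intro y hy h
    obtain ⟨r, hr⟩ : ∃ r, y * r * a ∉ P := by
      by_contra! hyra
      exact (hP.prime y a hyra).elim hy ha
    refine ih hr ?_
    rw [mul_assoc, ← pow_succ', hSI y _ h r]

theorem mem_of_isNilpotent (hSI : ∀ a b : R, a * b = 0 → ∀ r : R, a * r * b = 0)
    (hP : IsPrimeTwoSidedIdeal P) {a : R} (ha : IsNilpotent a) : a ∈ P := by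
  obtain ⟨n, hn⟩ := ha
  by_contra haP
  exact hP.mul_pow_ne_zero_of_notMem hSI haP n hP.one_notMem (by rw [one_mul, hn])

end IsPrimeTwoSidedIdeal

namespace TwoSidedIdeal

variable {R : Type*} [Ring R]

theorem mem_sSup_of_isChain {c : Set (TwoSidedIdeal R)} (hc : IsChain (· ≤ ·) c)
    (hne : c.Nonempty) {x : R} : x ∈ sSup c ↔ ∃ I ∈ c, x ∈ I := by
  refine ⟨fun hx => ?_, fun ⟨I, hI, hxI⟩ => le_sSup hI hxI⟩
  obtain ⟨I₀, hI₀⟩ := hne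
  let U : TwoSidedIdeal R := .mk' {x | ∃ I ∈ c, x ∈ I} ⟨I₀, hI₀, I₀.zero_mem⟩
    (fun ⟨I, hI, hx⟩ ⟨J, hJ, hy⟩ => by
      rcases hc.total hI hJ with hIJ | hJI
      · exact ⟨J, hJ, J.add_mem (hIJ hx) hy⟩
      · exact ⟨I, hI, I.add_mem hx (hJI hy)⟩)
    (fun ⟨I, hI, hx⟩ => ⟨I, hI, I.neg_mem hx⟩)
    (fun ⟨I, hI, hy⟩ => ⟨I, hI, I.mul_mem_left _ _ hy⟩)
    (fun ⟨I, hI, hx⟩ => ⟨I, hI, I.mul_mem_right _ _ hx⟩)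
  have hcU : sSup c ≤ U := sSup_le fun I hI y hy => (mem_mk' ..).2 ⟨I, hI, hy⟩
  simpa [U] using hcU hx

def leftColon (I : TwoSidedIdeal R) (b : R) : TwoSidedIdeal R :=
  .mk' {u | ∀ r, u * r * b ∈ I} (by simp [I.zero_mem])
    (fun hu hv r => by simpa [add_mul] using I.add_mem (hu r) (hv r))
    (fun hu r => by simpa using I.neg_mem (hu r))
    (fun {s u} hu r => by simpa [mul_assoc] using I.mul_mem_left s _ (hu r))
    (fun {u s} hu r => by simpa [mul_assoc] using hu (s * r))

def rightColon (I : TwoSidedIdeal R) (a : R) : TwoSidedIdeal R :=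
  .mk' {v | ∀ r, a * r * v ∈ I} (by simp [I.zero_mem])
    (fun hu hv r => by simpa [mul_add] using I.add_mem (hu r) (hv r))
    (fun hu r => by simpa using I.neg_mem (hu r))
    (fun {s v} hv r => by simpa [mul_assoc] using hv (r * s))
    (fun {v s} hv r => by simpa [mul_assoc] using I.mul_mem_right _ s (hv r))

theorem mem_leftColon {I : TwoSidedIdeal R} {b u : R} :
    u ∈ I.leftColon b ↔ ∀ r, u * r * b ∈ I := mem_mk' ..

theorem mem_rightColon {I : TwoSidedIdeal R} {a v : R} :
    v ∈ I.rightColon a ↔ ∀ r, a * r * v ∈ I := mem_mk' ..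

theorem le_leftColon (I : TwoSidedIdeal R) (b : R) : I ≤ I.leftColon b :=
  fun u hu => mem_leftColon.2 fun r => I.mul_mem_right _ b (I.mul_mem_right u r hu)

theorem le_rightColon (I : TwoSidedIdeal R) (a : R) : I ≤ I.rightColon a :=
  fun v hv => mem_rightColon.2 fun _ => I.mul_mem_left _ v hv

variable {x : R} {I : TwoSidedIdeal R}

theorem exists_pow_succ_mem_of_maximal (hI : Maximal (fun J => ∀ n, x ^ (n + 1) ∉ J) I)
    {J : TwoSidedIdeal R} (hIJ : I ≤ J) {a : R} (haJ : a ∈ J) (haI : a ∉ I) :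
    ∃ n, x ^ (n + 1) ∈ J := by
  by_contra! h
  exact haI (hI.2 h hIJ haJ)

theorem isPrimeTwoSidedIdeal_of_maximal (hI : Maximal (fun J => ∀ n, x ^ (n + 1) ∉ J) I) :
    IsPrimeTwoSidedIdeal (AddSubgroup.ofClass I) := by
  refine ⟨fun h => hI.1 0 ((Set.ext_iff.1 h _).2 trivial), fun a ha r => I.mul_mem_left r a ha,
    fun a ha r => I.mul_mem_right a r ha, fun a b hab => ?_⟩
  by_contra! ⟨ha, hb⟩
  obtain ⟨m, hm⟩ :=
    exists_pow_succ_mem_of_maximal hI (I.le_leftColon b) (mem_leftColon.2 hab) ha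
  obtain ⟨k, hk⟩ := exists_pow_succ_mem_of_maximal hI (I.le_rightColon (x ^ (m + 1)))
    (mem_rightColon.2 (mem_leftColon.1 hm)) hb
  refine hI.1 (m + k + 1) ?_
  simpa [← pow_add, add_right_comm, add_assoc] using mem_rightColon.1 hk 1

end TwoSidedIdeal

theorem exists_isPrimeTwoSidedIdeal_notMem {R : Type*} [Ring R] {x : R} (hx : ¬IsNilpotent x) :
    ∃ P : AddSubgroup R, IsPrimeTwoSidedIdeal P ∧ x ∉ P := by
  obtain ⟨I, -, hI⟩ := zorn_le_nonempty₀ {J : TwoSidedIdeal R | ∀ n, x ^ (n + 1) ∉ J}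
    (fun c hcS hc J hJ => ⟨sSup c, fun n hn => by
      obtain ⟨K, hK, hxK⟩ := (TwoSidedIdeal.mem_sSup_of_isChain hc ⟨J, hJ⟩).1 hn
      exact hcS hK n hxK, fun _ => le_sSup⟩)
    ⊥ (fun n hn => hx ⟨n + 1, (TwoSidedIdeal.mem_bot R).1 hn⟩)
  refine ⟨_, TwoSidedIdeal.isPrimeTwoSidedIdeal_of_maximal hI, fun hxI => hI.1 0 ?_⟩
  rwa [zero_add, pow_one]

theorem stmt_6 (R : Type*) [Ring R]
    (hSI : ∀ a b : R, a * b = 0 → ∀ r : R, a * r * b = 0) :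
    (∀ a : R, IsNilpotent a → ∀ P : AddSubgroup R, IsPrimeTwoSidedIdeal P → a ∈ P) ∧
    {a : R | IsNilpotent a} =
      ⋂ P ∈ {P : AddSubgroup R | IsPrimeTwoSidedIdeal P}, (P : Set R) := by
  have hnil (a : R) (ha : IsNilpotent a) (P : AddSubgroup R) (hP : IsPrimeTwoSidedIdeal P) :
      a ∈ P :=
    hP.mem_of_isNilpotent hSI ha
  refine ⟨hnil, Set.Subset.antisymm (fun a ha => Set.mem_iInter₂.2 (hnil a ha)) ?_⟩
  intro a ha
  by_contra hnot
  obtain ⟨P, hP, haP⟩ := exists_isPrimeTwoSidedIdeal_notMem hnot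
  exact haP (Set.mem_iInter₂.1 ha P hP)
end

section
/- Let R be a commutative ring with identity and G a group. The group ring RG is left duo if and only if it is right duo. -/
def IsRightDuo (S : Type*) [Ring S] : Prop :=
  ∀ I : AddSubgroup S, (∀ a ∈ I, ∀ r : S, a * r ∈ I) → (∀ a ∈ I, ∀ r : S, r * a ∈ I)

def IsLeftDuo (S : Type*) [Ring S] : Prop :=
  ∀ I : AddSubgroup S, (∀ a ∈ I, ∀ r : S, r * a ∈ I) → (∀ a ∈ I, ∀ r : S, a * r ∈ I)

/-!
The classical involution `∑ a_g g ↦ ∑ a_g g⁻¹` is a ring isomorphism `RG ≃+* RGᵐᵒᵖ`. Being left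
duo is invariant under ring isomorphisms, and `Sᵐᵒᵖ` is left duo exactly when `S` is right duo.
-/

open MulOpposite

theorem IsLeftDuo.of_ringEquiv {S T : Type*} [Ring S] [Ring T] (e : S ≃+* T)
    (hS : IsLeftDuo S) : IsLeftDuo T := by
  intro I hI a ha r
  let J : AddSubgroup S := I.comap e.toAddMonoidHom
  have hJ : ∀ b ∈ J, ∀ s : S, s * b ∈ J := fun b hb s => by
    simpa [J] using hI (e b) hb (e s)
  simpa [J] using hS J hJ (e.symm a) (by simpa [J] using ha) (e.symm r)

theorem RingEquiv.isLeftDuo_congr {S T : Type*} [Ring S] [Ring T] (e : S ≃+* T) :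
    IsLeftDuo S ↔ IsLeftDuo T :=
  ⟨IsLeftDuo.of_ringEquiv e, IsLeftDuo.of_ringEquiv e.symm⟩

theorem isLeftDuo_mulOpposite_iff {S : Type*} [Ring S] : IsLeftDuo Sᵐᵒᵖ ↔ IsRightDuo S := by
  constructor
  · intro h I hI a ha r
    let J : AddSubgroup Sᵐᵒᵖ := I.comap (opAddEquiv : S ≃+ Sᵐᵒᵖ).symm.toAddMonoidHom
    exact h J (fun b hb s => hI b.unop hb s.unop) (op a) ha (op r)
  · intro h I hI a ha r
    let J : AddSubgroup S := I.comap (opAddEquiv : S ≃+ Sᵐᵒᵖ).toAddMonoidHom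
    exact h J (fun b hb s => hI (op b) hb (op s)) a.unop ha r.unop

namespace MonoidAlgebra

noncomputable def classicalInvolution (R G : Type*) [CommRing R] [Group G] :
    MonoidAlgebra R G ≃+* (MonoidAlgebra R G)ᵐᵒᵖ :=
  (mapDomainRingEquiv R (MulEquiv.inv' G)).trans <|
    (mapRingEquiv Gᵐᵒᵖ (RingEquiv.toOpposite R)).trans MonoidAlgebra.opRingEquiv.symm

end MonoidAlgebra

theorem stmt_7 (R G : Type*) [CommRing R] [Group G] :
    IsLeftDuo (MonoidAlgebra R G) ↔ IsRightDuo (MonoidAlgebra R G) :=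
  (MonoidAlgebra.classicalInvolution R G).isLeftDuo_congr.trans isLeftDuo_mulOpposite_iff
end

section
/- Let R be a commutative ring with identity and G any group. The group ring RG is reversible if and only if RG has the SI property. -/
/-!
Reversibility always gives the SI property: from `a * b = 0` we get `(r * b) * a = r * (b * a) = 0`,
hence `a * (r * b) = 0`. Conversely, in a group ring the coefficient of `b * a` at `g` is the trace of
`g⁻¹ * b * a`, and since the trace is invariant under cyclic permutation this equals the trace of
`a * g⁻¹ * b`, which vanishes by the SI property.
-/

theorem mul_mul_eq_zero_of_reversible {A : Type*} [SemigroupWithZero A]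
    (hrev : ∀ a b : A, a * b = 0 → b * a = 0) {a b : A} (hab : a * b = 0) (r : A) :
    a * r * b = 0 := by
  have hrba : r * b * a = 0 := by rw [mul_assoc, hrev a b hab, mul_zero]
  rw [mul_assoc]
  exact hrev _ _ hrba

namespace MonoidAlgebra

variable {R G : Type*} [Group G]

theorem coeff_eq_coeff_one_single_inv_mul [Semiring R] (x : MonoidAlgebra R G) (g : G) :
    x.coeff g = (single g⁻¹ 1 * x).coeff 1 := by
  simp

theorem coeff_one_mul_comm [CommSemiring R] (x y : MonoidAlgebra R G) :
    (x * y).coeff 1 = (y * x).coeff 1 := by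
  induction x using MonoidAlgebra.induction with
  | zero => simp
  | single_add g c f _ _ ih =>
      simp only [add_mul, mul_add, coeff_add, Finsupp.add_apply, ih, coeff_single_mul_apply,
        coeff_mul_single_apply, one_mul, mul_one, mul_comm]

theorem mul_eq_zero_of_forall_mul_mul_eq_zero [CommSemiring R] {a b : MonoidAlgebra R G}
    (h : ∀ r, a * r * b = 0) : b * a = 0 := by
  ext g
  rw [coeff_eq_coeff_one_single_inv_mul, ← mul_assoc, coeff_one_mul_comm, ← mul_assoc, h]
  simp

end MonoidAlgebra

theorem stmt_9 (R G : Type*) [CommRing R] [Group G] :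
    (∀ a b : MonoidAlgebra R G, a * b = 0 → b * a = 0) ↔
    (∀ a b : MonoidAlgebra R G, a * b = 0 → ∀ r : MonoidAlgebra R G, a * r * b = 0) :=
  ⟨fun hrev _ _ hab => mul_mul_eq_zero_of_reversible hrev hab,
    fun hsi _ _ hab => MonoidAlgebra.mul_eq_zero_of_forall_mul_mul_eq_zero (hsi _ _ hab)⟩
end

section
/- Let R be a semisimple ring that is reversible. Then R is isomorphic to a finite direct sum of division rings. -/
universe u

section Aux

variable {R : Type u} [Ring R]

/-- Key algebraic lemma: given a finite family of atomic left ideals generated by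
central orthogonal idempotents summing to 1, the ring is a product of division rings. -/
lemma aux_prod_division {k : ℕ} (I : Fin k → Submodule R R) (e : Fin k → R)
    (hmem : ∀ i, e i ∈ I i)
    (hspan : ∀ i, ∀ x ∈ I i, x * e i = x)
    (hcent : ∀ i (x : R), e i * x = x * e i)
    (horth : ∀ i j, i ≠ j → e i * e j = 0)
    (hsum : ∑ i, e i = 1)
    (hatom : ∀ i, IsAtom (I i)) :
    ∃ (D : Fin k → Type u) (_ : ∀ i, DivisionRing (D i)),
      Nonempty (R ≃+* ((i : Fin k) → D i)) := by
  classical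
  have hidem : ∀ i, e i * e i = e i := fun i => hspan i (e i) (hmem i)
  have heix : ∀ i, ∀ x ∈ I i, e i * x = x := fun i x hx => by
    rw [hcent i x, hspan i x hx]
  have hkill : ∀ i j, i ≠ j → ∀ x ∈ I j, e i * x = 0 := by
    intro i j hij x hx
    rw [← hspan j x hx, ← mul_assoc, hcent i x, mul_assoc, horth i j hij, mul_zero]
  -- ring structure on each atom
  letI instMul : ∀ i, Mul ↥(I i) := fun i =>
    ⟨fun x y => ⟨x.1 * y.1, (I i).smul_mem x.1 y.2⟩⟩
  letI instOne : ∀ i, One ↥(I i) := fun i => ⟨⟨e i, hmem i⟩⟩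
  have mul_def : ∀ i (x y : ↥(I i)), ((x * y : ↥(I i)) : R) = (x : R) * (y : R) :=
    fun _ _ _ => rfl
  have one_def : ∀ i, ((1 : ↥(I i)) : R) = e i := fun _ => rfl
  letI instRing : ∀ i, Ring ↥(I i) := fun i =>
    { (inferInstance : AddCommGroup ↥(I i)) with
      mul := (· * ·)
      one := 1
      mul_assoc := fun x y z => Subtype.ext (mul_assoc x.1 y.1 z.1)
      one_mul := fun x => Subtype.ext (heix i x.1 x.2)
      mul_one := fun x => Subtype.ext (hspan i x.1 x.2)
      left_distrib := fun x y z => Subtype.ext (mul_add x.1 y.1 z.1)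
      right_distrib := fun x y z => Subtype.ext (add_mul x.1 y.1 z.1)
      zero_mul := fun x => Subtype.ext (zero_mul x.1)
      mul_zero := fun x => Subtype.ext (mul_zero x.1) }
  have hnt : ∀ i, (Nontrivial ↥(I i)) := by
    intro i
    refine ⟨⟨0, 1, fun h => (hatom i).1 ?_⟩⟩
    have he0 : e i = 0 := by
      have := congrArg Subtype.val h
      simpa [one_def] using this.symm
    refine (Submodule.eq_bot_iff _).mpr fun x hx => ?_
    rw [← hspan i x hx, he0, mul_zero]
  letI instDiv : ∀ i, DivisionRing ↥(I i) := by
    intro i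
    haveI := hnt i
    refine DivisionRing.ofIsUnitOrEqZero ?_
    have hleft : ∀ x : ↥(I i), x ≠ 0 → ∃ y : ↥(I i), y * x = 1 := by
      intro x hx
      have hx1 : (x : R) ≠ 0 := fun h => hx (Subtype.ext h)
      have hle : Submodule.span R {(x : R)} ≤ I i := by
        rw [Submodule.span_le, Set.singleton_subset_iff]; exact x.2
      have hne : Submodule.span R {(x : R)} ≠ ⊥ := by
        intro h
        exact hx1 ((Submodule.mem_bot R).mp
          (h ▸ Submodule.mem_span_singleton_self (x : R)))
      have heq : Submodule.span R {(x : R)} = I i := by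
        rcases lt_or_eq_of_le hle with h | h
        · exact absurd ((hatom i).2 _ h) hne
        · exact h
      have : e i ∈ Submodule.span R {(x : R)} := by rw [heq]; exact hmem i
      obtain ⟨r, hr⟩ := Submodule.mem_span_singleton.mp this
      rw [smul_eq_mul] at hr
      refine ⟨⟨e i * r * e i, (I i).smul_mem _ (hmem i)⟩, Subtype.ext ?_⟩
      show e i * r * e i * (x : R) = e i
      rw [mul_assoc, heix i x.1 x.2, mul_assoc, hr, hidem i]
    intro x
    by_cases hx : x = 0
    · exact Or.inr hx
    · left
      obtain ⟨y, hy⟩ := hleft x hx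
      have hy0 : y ≠ 0 := by
        intro h
        rw [h, zero_mul] at hy
        exact zero_ne_one hy
      obtain ⟨z, hz⟩ := hleft y hy0
      have hzx : z = x := by
        calc z = z * (y * x) := by rw [hy, mul_one]
        _ = z * y * x := (mul_assoc z y x).symm
        _ = x := by rw [hz, one_mul]
      exact ⟨⟨x, y, by rw [← hzx, hz], hy⟩, rfl⟩
  -- the ring isomorphism
  refine ⟨fun i => ↥(I i), instDiv, ⟨?_⟩⟩
  refine
    { toFun := fun r i => ⟨e i * r, by rw [hcent i r]; exact (I i).smul_mem r (hmem i)⟩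
      invFun := fun g => ∑ i, (g i : R)
      left_inv := ?_
      right_inv := ?_
      map_mul' := ?_
      map_add' := ?_ }
  · intro r
    simp only
    rw [← Finset.sum_mul, hsum, one_mul]
  · intro g
    funext i
    apply Subtype.ext
    show e i * (∑ j, ((g j : R))) = (g i : R)
    rw [Finset.mul_sum]
    rw [Finset.sum_eq_single i]
    · exact heix i _ (g i).2
    · intro j _ hj
      exact hkill i j (Ne.symm hj) _ (g j).2
    · intro h; exact absurd (Finset.mem_univ i) h
  · intro r s
    funext i
    apply Subtype.ext
    show e i * (r * s) = (e i * r) * (e i * s)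
    symm
    calc e i * r * (e i * s) = e i * (r * e i) * s := by rw [mul_assoc, mul_assoc, mul_assoc]
    _ = e i * (e i * r) * s := by rw [hcent i r]
    _ = e i * e i * (r * s) := by rw [← mul_assoc, mul_assoc (e i * e i)]
    _ = e i * (r * s) := by rw [hidem i]
  · intro r s
    funext i
    apply Subtype.ext
    show e i * (r + s) = e i * r + e i * s
    rw [mul_add]

end Aux

theorem stmt_19 (R : Type u) [Ring R] [IsSemisimpleRing R]
    (hrev : ∀ a b : R, a * b = 0 → b * a = 0) :
    ∃ (k : ℕ) (D : Fin k → Type u) (_ : ∀ i, DivisionRing (D i)),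
      Nonempty (R ≃+* ((i : Fin k) → D i)) := by
  classical
  -- R is reduced
  have hred : ∀ a : R, a * a = 0 → a = 0 := by
    intro a ha
    obtain ⟨f, hfidem, hfspan⟩ :=
      IsSemisimpleRing.ideal_eq_span_idempotent (Ideal.span {a})
    have haf : a ∈ Ideal.span ({f} : Set R) := hfspan ▸ Ideal.subset_span rfl
    obtain ⟨r, hr⟩ := Submodule.mem_span_singleton.mp haf
    rw [smul_eq_mul] at hr
    have hfa : f ∈ Ideal.span ({a} : Set R) := by
      rw [hfspan]; exact Ideal.subset_span rfl
    obtain ⟨s, hs⟩ := Submodule.mem_span_singleton.mp hfa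
    rw [smul_eq_mul] at hs
    have haf2 : a * f = a := by rw [← hr, mul_assoc, hfidem]
    have h1 : a * (1 - f) = 0 := by rw [mul_sub, mul_one, haf2, sub_self]
    have h2 : (1 - f) * a = 0 := hrev _ _ h1
    have h3 : f * a = 0 := by rw [← hs, mul_assoc, ha, mul_zero]
    have : a - f * a = 0 := by rw [← one_mul a, ← mul_assoc, mul_one] at h2 ⊢; rw [← sub_mul]; exact h2
    rw [h3, sub_zero] at this
    exact this
  -- all idempotents are central
  have hcent : ∀ g : R, g * g = g → ∀ x : R, g * x = x * g := by
    intro g hg x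
    have hgg : ∀ y : R, g * (g * y) = g * y := fun y => by rw [← mul_assoc, hg]
    have h1 : g * x - g * x * g = 0 := by
      apply hred
      simp only [mul_sub, sub_mul, mul_assoc, hgg]
      abel
    have h2 : x * g - g * x * g = 0 := by
      apply hred
      simp only [mul_sub, sub_mul, mul_assoc, hgg]
      abel
    have := sub_eq_zero.mp h1
    rw [this, ← sub_eq_zero.mp h2]
  -- decomposition into atoms
  obtain ⟨s, hs_ind, hs_top, hs_simple⟩ :=
    IsSemisimpleModule.exists_sSupIndep_sSup_simples_eq_top R R
  obtain ⟨t, hts, htsup⟩ :=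
    CompleteLattice.WellFoundedGT.isSupFiniteCompact (Submodule R R) s
  rw [hs_top] at htsup
  set k := t.card with hk
  set E : ↥t ≃ Fin k := t.equivFin with hE
  set I : Fin k → Submodule R R := fun i => ((E.symm i : ↥t) : Submodule R R) with hI
  have hI_mem_t : ∀ i, I i ∈ t := fun i => (E.symm i).2
  have hI_mem_s : ∀ i, I i ∈ s := fun i => hts (hI_mem_t i)
  have hI_inj : ∀ i j, i ≠ j → I i ≠ I j := by
    intro i j hij h
    exact hij (by
      have : E.symm i = E.symm j := Subtype.ext h
      simpa using congrArg E this)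
  have hatom : ∀ i, IsAtom (I i) := fun i =>
    (isSimpleModule_iff_isAtom).mp (hs_simple _ (hI_mem_s i))
  have hdisj : ∀ i j, i ≠ j → I i ⊓ I j = ⊥ := fun i j hij =>
    disjoint_iff.mp
      (hs_ind.pairwiseDisjoint (hI_mem_s i) (hI_mem_s j) (hI_inj i j hij))
  have htop : (⨆ i, I i) = ⊤ := by
    rw [eq_top_iff, htsup]
    refine Finset.sup_le fun J hJ => ?_
    have : I (E ⟨J, hJ⟩) = J := by simp [hI]
    rw [show (id J : Submodule R R) = I (E ⟨J, hJ⟩) from this.symm]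
    exact le_iSup I _
  -- idempotent generators
  choose e hidem hspanEq using fun i => IsSemisimpleRing.ideal_eq_span_idempotent (I i)
  have hmem : ∀ i, e i ∈ I i := fun i => (hspanEq i) ▸ Ideal.subset_span rfl
  have hspan : ∀ i, ∀ x ∈ I i, x * e i = x := by
    intro i x hx
    rw [hspanEq i] at hx
    obtain ⟨r, hr⟩ := Submodule.mem_span_singleton.mp hx
    rw [smul_eq_mul] at hr
    rw [← hr, mul_assoc, hidem i]
  have hcent' : ∀ i (x : R), e i * x = x * e i := fun i => hcent (e i) (hidem i)
  have heix : ∀ i, ∀ x ∈ I i, e i * x = x := fun i x hx => by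
    rw [hcent' i x, hspan i x hx]
  have horth : ∀ i j, i ≠ j → e i * e j = 0 := by
    intro i j hij
    have h1 : e i * e j ∈ I j := (I j).smul_mem (e i) (hmem j)
    have h2 : e i * e j ∈ I i := by
      rw [hcent' i (e j)]
      exact (I i).smul_mem (e j) (hmem i)
    have : e i * e j ∈ I i ⊓ I j := ⟨h2, h1⟩
    rw [hdisj i j hij] at this
    exact (Submodule.mem_bot R).mp this
  have hkill : ∀ i j, i ≠ j → ∀ x ∈ I j, e i * x = 0 := by
    intro i j hij x hx
    rw [← hspan j x hx, ← mul_assoc, hcent' i x, mul_assoc, horth i j hij, mul_zero]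
  have hsum : ∑ i, e i = 1 := by
    have h1 : (1 : R) ∈ ⨆ i, I i := htop ▸ Submodule.mem_top
    rw [Submodule.mem_iSup_iff_exists_finsupp] at h1
    obtain ⟨f, hf, hfsum⟩ := h1
    have hfsum' : ∑ i, f i = 1 := by
      rw [← hfsum, Finsupp.sum_fintype]
      intro i; rfl
    have hef : ∀ i, e i = f i := by
      intro i
      calc e i = e i * 1 := (mul_one _).symm
      _ = ∑ j, e i * f j := by rw [← hfsum', Finset.mul_sum]
      _ = f i := by
          rw [Finset.sum_eq_single i]
          · exact heix i _ (hf i)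
          · intro j _ hj; exact hkill i j (Ne.symm hj) _ (hf j)
          · intro h; exact absurd (Finset.mem_univ i) h
    rw [show (∑ i, e i) = ∑ i, f i from Finset.sum_congr rfl fun i _ => hef i, hfsum']
  obtain ⟨D, inst, hequiv⟩ :=
    aux_prod_division I e hmem hspan hcent' horth hsum hatom
  exact ⟨k, D, inst, hequiv⟩
end
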